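/- arXiv:1709.07685 — 2 statements merged into one kernel-verified Lean document; each statement's English description precedes it below -/
import Mathlib

section
/- Let N ≥ 5, 0 < s < 2, and for ε ∈ (0,1) define U_ε(x) = ε^((N−2)/(2(2−s))) (ε + |x|^(2−s))^((2−N)/(2−s)). Then for any fixed R > 0 there exists C > 0 (depending on N, s, R) such that ∫_{B_R(0)} U_ε(x)² dx ≤ C ε^(2/(2−s)) for all ε ∈ (0,1). -/
/-!
With `q = 2 - s` and `λ = ε ^ (1/q)` one has `ε + ‖x‖ ^ q = ε (1 + ‖x/λ‖ ^ q)`, so `U_ε` is a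
rescaling of the fixed profile `(1 + ‖y‖ ^ q) ^ ((2 - N)/q)`. The substitution `x = λ y` turns
`∫ U_ε²` over the whole space into `ε ^ (2/q)` times the integral of the squared profile, which is
finite because it decays like `‖y‖ ^ (4 - 2N)` and `2N - 4 > N` for `N ≥ 5`. The integral over the
ball is bounded by the integral over the whole space.
-/

open MeasureTheory Module

lemma Real.one_add_rpow_le_two_rpow_mul {u q : ℝ} (hu : 0 ≤ u) (hq : 0 ≤ q) :
    (1 + u) ^ q ≤ 2 ^ q * (1 + u ^ q) := by
  have huq : 0 ≤ u ^ q := Real.rpow_nonneg hu q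
  rcases le_total u 1 with h | h
  · calc (1 + u) ^ q ≤ 2 ^ q := Real.rpow_le_rpow (by positivity) (by linarith) hq
      _ ≤ 2 ^ q * (1 + u ^ q) := le_mul_of_one_le_right (by positivity) (by linarith)
  · calc (1 + u) ^ q ≤ (2 * u) ^ q := Real.rpow_le_rpow (by positivity) (by linarith) hq
      _ = 2 ^ q * u ^ q := Real.mul_rpow zero_le_two hu
      _ ≤ 2 ^ q * (1 + u ^ q) := by gcongr; linarith

lemma Real.one_add_rpow_rpow_neg_le {u q a : ℝ} (hu : 0 ≤ u) (hq : 0 ≤ q) (ha : 0 ≤ a) :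
    (1 + u ^ q) ^ (-a) ≤ 2 ^ (q * a) * (1 + u) ^ (-(q * a)) := by
  have h := Real.one_add_rpow_le_two_rpow_mul hu hq
  calc (1 + u ^ q) ^ (-a) ≤ ((2 ^ q)⁻¹ * (1 + u) ^ q) ^ (-a) :=
        Real.rpow_le_rpow_of_nonpos (by positivity)
          ((inv_mul_le_iff₀ (by positivity)).2 h) (by linarith)
    _ = 2 ^ (q * a) * (1 + u) ^ (-(q * a)) := by
        rw [Real.mul_rpow (by positivity) (by positivity), Real.inv_rpow (by positivity),
          ← Real.rpow_mul zero_le_two, ← Real.rpow_mul (by positivity), mul_neg,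
          Real.rpow_neg zero_le_two, inv_inv]

section

variable {E : Type*} [NormedAddCommGroup E] [NormedSpace ℝ E]

lemma add_norm_rpow_rpow_eq {ε q : ℝ} (hε : 0 < ε) (hq : 0 < q) (a : ℝ) (x : E) :
    (ε + ‖x‖ ^ q) ^ (-a) = ε ^ (-a) * (1 + ‖(ε ^ q⁻¹)⁻¹ • x‖ ^ q) ^ (-a) := by
  have hscale : ‖(ε ^ q⁻¹)⁻¹ • x‖ ^ q = ε⁻¹ * ‖x‖ ^ q := by
    rw [norm_smul, Real.norm_of_nonneg (by positivity), Real.mul_rpow (by positivity)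
      (norm_nonneg x), Real.inv_rpow (by positivity), ← Real.rpow_mul hε.le,
      inv_mul_cancel₀ hq.ne', Real.rpow_one]
  rw [hscale, ← Real.mul_rpow hε.le (by positivity), mul_add, mul_one,
    mul_inv_cancel_left₀ hε.ne']

variable [FiniteDimensional ℝ E] [MeasurableSpace E] [BorelSpace E]
  (μ : Measure E) [μ.IsAddHaarMeasure]

lemma integrable_one_add_norm_rpow_rpow_neg {q a : ℝ} (hq : 0 < q)
    (hdim : (finrank ℝ E : ℝ) < q * a) :
    Integrable (fun y : E ↦ (1 + ‖y‖ ^ q) ^ (-a)) μ := by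
  have ha : 0 ≤ a := (pos_of_mul_pos_right ((finrank ℝ E).cast_nonneg.trans_lt hdim) hq.le).le
  refine ((integrable_one_add_norm hdim).const_mul (2 ^ (q * a))).mono'
    (by fun_prop : Measurable _).aestronglyMeasurable (ae_of_all _ fun y ↦ ?_)
  rw [Real.norm_of_nonneg (by positivity)]
  exact Real.one_add_rpow_rpow_neg_le (norm_nonneg y) hq.le ha

lemma integral_one_add_norm_rpow_rpow_neg_pos {q a : ℝ} (hq : 0 < q)
    (hdim : (finrank ℝ E : ℝ) < q * a) :
    0 < ∫ y, (1 + ‖y‖ ^ q) ^ (-a) ∂μ := by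
  rw [integral_pos_iff_support_of_nonneg (fun y ↦ by positivity)
    (integrable_one_add_norm_rpow_rpow_neg μ hq hdim)]
  have hsupp : Function.support (fun y : E ↦ (1 + ‖y‖ ^ q) ^ (-a)) = Set.univ :=
    Function.support_eq_univ fun y ↦ (by positivity : (0 : ℝ) < _).ne'
  rw [hsupp]
  exact Measure.measure_univ_pos.2 (NeZero.ne μ)

lemma integrable_add_norm_rpow_rpow_neg {ε q a : ℝ} (hε : 0 < ε) (hq : 0 < q)
    (hdim : (finrank ℝ E : ℝ) < q * a) :
    Integrable (fun x : E ↦ (ε + ‖x‖ ^ q) ^ (-a)) μ := by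
  simp_rw [add_norm_rpow_rpow_eq hε hq]
  exact ((integrable_one_add_norm_rpow_rpow_neg μ hq hdim).comp_smul
    (by positivity)).const_mul _

lemma integral_add_norm_rpow_rpow_neg {ε q : ℝ} (hε : 0 < ε) (hq : 0 < q) (a : ℝ) :
    ∫ x, (ε + ‖x‖ ^ q) ^ (-a) ∂μ
      = ε ^ (finrank ℝ E / q - a) * ∫ y, (1 + ‖y‖ ^ q) ^ (-a) ∂μ := by
  simp_rw [add_norm_rpow_rpow_eq hε hq]
  rw [integral_const_mul,
    Measure.integral_comp_inv_smul_of_nonneg μ (fun y : E ↦ (1 + ‖y‖ ^ q) ^ (-a)) (by positivity),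
    smul_eq_mul, ← Real.rpow_natCast, ← Real.rpow_mul hε.le, ← mul_assoc,
    ← Real.rpow_add hε]
  congr 2
  ring

end

theorem stmt_9_general (N : ℕ) (hN : 5 ≤ N) (s : ℝ) (hs2 : s < 2)
    (U : ℝ → EuclideanSpace ℝ (Fin N) → ℝ)
    (hU : ∀ ε ∈ Set.Ioo (0 : ℝ) 1, ∀ x, U ε x
      = ε ^ (((N : ℝ) - 2) / (2 * (2 - s))) * (ε + ‖x‖ ^ (2 - s)) ^ ((2 - (N : ℝ)) / (2 - s)))
    (R : ℝ) :
    ∃ C > (0 : ℝ), ∀ ε ∈ Set.Ioo (0 : ℝ) 1,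
      (∫ x in Metric.ball (0 : EuclideanSpace ℝ (Fin N)) R, U ε x ^ 2)
        ≤ C * ε ^ (2 / (2 - s)) := by
  set q := 2 - s
  have hq : 0 < q := by linarith
  have hdim : (finrank ℝ (EuclideanSpace ℝ (Fin N)) : ℝ) < q * ((2 * N - 4) / q) := by
    have : (5 : ℝ) ≤ N := by exact_mod_cast hN
    rw [finrank_euclideanSpace_fin, mul_div_cancel₀ _ hq.ne']
    linarith
  refine ⟨_, integral_one_add_norm_rpow_rpow_neg_pos volume hq hdim, ?_⟩
  rintro ε ⟨hε, hε1⟩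
  have hsq : ∀ x, U ε x ^ 2 = ε ^ ((N - 2) / q) * (ε + ‖x‖ ^ q) ^ (-((2 * N - 4) / q)) := by
    intro x
    rw [hU ε ⟨hε, hε1⟩ x, mul_pow, ← Real.rpow_mul_natCast hε.le,
      ← Real.rpow_mul_natCast (by positivity)]
    congr 2 <;> field_simp <;> ring
  have hint := (integrable_add_norm_rpow_rpow_neg volume hε hq hdim).const_mul
    (ε ^ (((N : ℝ) - 2) / q))
  simp_rw [← hsq] at hint
  calc (∫ x in Metric.ball 0 R, U ε x ^ 2)
      ≤ ∫ x, U ε x ^ 2 := setIntegral_le_integral hint (ae_of_all _ fun _ ↦ sq_nonneg _)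
    _ = (∫ y, (1 + ‖y‖ ^ q) ^ (-((2 * N - 4) / q))) * ε ^ (2 / q) := by
      simp_rw [hsq]
      rw [integral_const_mul, integral_add_norm_rpow_rpow_neg volume hε hq,
        finrank_euclideanSpace_fin, ← mul_assoc, ← Real.rpow_add hε, mul_comm]
      congr 2
      field_simp
      ring

/-- L² estimate for the truncated extremal profile when N ≥ 5:
∫_{B_R} U_ε² ≤ C ε^{2/(2−s)}. -/
theorem stmt_9 (N : ℕ) (hN : 5 ≤ N) (s : ℝ) (hs : 0 < s) (hs2 : s < 2)
    (U : ℝ → EuclideanSpace ℝ (Fin N) → ℝ)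
    (hU : ∀ ε ∈ Set.Ioo (0 : ℝ) 1, ∀ x, U ε x
      = ε ^ (((N : ℝ) - 2) / (2 * (2 - s))) * (ε + ‖x‖ ^ (2 - s)) ^ ((2 - (N : ℝ)) / (2 - s)))
    (R : ℝ) (hR : 0 < R) :
    ∃ C > (0 : ℝ), ∀ ε ∈ Set.Ioo (0 : ℝ) 1,
      (∫ x in Metric.ball (0 : EuclideanSpace ℝ (Fin N)) R, U ε x ^ 2)
        ≤ C * ε ^ (2 / (2 - s)) :=
  stmt_9_general N hN s hs2 U hU R
end

section
/- Let N = 4, 0 < s < 2, and for ε ∈ (0, 1/2) define U_ε(x) = ε^(1/(2−s)) (ε + |x|^(2−s))^(−2/(2−s)) on ℝ⁴. Then for any fixed R > 0 there exists C > 0 such that ∫_{B_R(0)} U_ε(x)² dx ≤ C ε^(2/(2−s)) |ln ε| for all ε ∈ (0, 1/2). -/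
/-!
In polar coordinates the integral becomes `4 |B₁| ε^{2/(2-s)} ∫₀^R y³ (ε + y^{2-s})^{-4/(2-s)} dy`.
Below the scale `r = ε^{1/(2-s)}` the integrand is at most `y³ ε^{-4/(2-s)}`, contributing
at most `1/4`; above it, it is at most `1/y`, contributing `log (R / r) ≤ |log R| + |log ε|/(2-s)`.
Since `|log ε| ≥ log 2` for `ε < 1/2`, the constant terms are absorbed into a multiple of `|log ε|`.
-/

open MeasureTheory

open Set Real Metric

theorem setIntegral_ball_fun_norm {E F : Type*} [NormedAddCommGroup E] [NormedSpace ℝ E]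
    [FiniteDimensional ℝ E] [Nontrivial E] [MeasurableSpace E] [BorelSpace E]
    [NormedAddCommGroup F] [NormedSpace ℝ F] (μ : Measure E) [μ.IsAddHaarMeasure] (f : ℝ → F) (R : ℝ) :
    ∫ x in ball 0 R, f ‖x‖ ∂μ = Module.finrank ℝ E • μ.real (ball 0 1) •
      ∫ y in Ioo 0 R, y ^ (Module.finrank ℝ E - 1) • f y := by
  have hball : (ball (0 : E) R).indicator (fun x => f ‖x‖) = fun x => (Iio R).indicator f ‖x‖ :=
    funext fun x => by classical simp [indicator_apply]
  rw [← integral_indicator measurableSet_ball, hball, integral_fun_norm_addHaar,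
    ← Ioi_inter_Iio, ← setIntegral_indicator measurableSet_Iio]
  simp_rw [indicator_smul_apply]

theorem integrableOn_Icc_pow_mul_add_rpow_rpow (n : ℕ) {a ε c d : ℝ} (p : ℝ) (ha : 0 ≤ a)
    (hε : 0 < ε) (hc : 0 ≤ c) :
    IntegrableOn (fun y : ℝ => y ^ n * (ε + y ^ a) ^ p) (Icc c d) := by
  refine ContinuousOn.integrableOn_Icc <|
    (continuous_pow n).continuousOn.mul (ContinuousOn.rpow_const ?_ fun y hy => ?_)
  · exact continuousOn_const.add fun y _ =>
      (continuousAt_rpow_const y a (Or.inr ha)).continuousWithinAt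
  · exact Or.inl (by have := rpow_nonneg (hc.trans hy.1) a; positivity)

theorem integral_Ioo_pow_mul_add_rpow_le {n : ℕ} {a ε m : ℝ} (ha : 0 < a) (hε : 0 < ε)
    (hm : 0 ≤ m) :
    ∫ y in Ioo 0 m, y ^ n * (ε + y ^ a) ^ (-((n + 1) / a))
      ≤ m ^ (n + 1) / (n + 1) * ε ^ (-((n + 1) / a)) := by
  have hp : 0 ≤ (n + 1) / a := by positivity
  calc ∫ y in Ioo 0 m, y ^ n * (ε + y ^ a) ^ (-((n + 1) / a))
      ≤ ∫ y in Ioo 0 m, y ^ n * ε ^ (-((n + 1) / a)) := by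
        refine setIntegral_mono_on ?_ ?_ measurableSet_Ioo fun y hy => ?_
        · exact (integrableOn_Icc_pow_mul_add_rpow_rpow n _ ha.le hε le_rfl).mono_set
            Ioo_subset_Icc_self
        · exact (continuous_pow n |>.mul continuous_const).integrableOn_Icc.mono_set
            Ioo_subset_Icc_self
        · refine mul_le_mul_of_nonneg_left ?_ (pow_nonneg hy.1.le n)
          exact rpow_le_rpow_of_nonpos hε (le_add_of_nonneg_right (rpow_nonneg hy.1.le a))
            (neg_nonpos.mpr hp)
    _ = m ^ (n + 1) / (n + 1) * ε ^ (-((n + 1) / a)) := by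
        rw [integral_mul_const, ← integral_Ioc_eq_integral_Ioo,
          ← intervalIntegral.integral_of_le hm, integral_pow]
        simp

theorem pow_mul_add_rpow_le_one_div {n : ℕ} {a ε y : ℝ} (ha : 0 < a) (hε : 0 < ε) (hy : 0 < y) :
    y ^ n * (ε + y ^ a) ^ (-((n + 1) / a)) ≤ 1 / y := by
  have hya : 0 < y ^ a := rpow_pos_of_pos hy a
  calc y ^ n * (ε + y ^ a) ^ (-((n + 1) / a)) ≤ y ^ n * (y ^ a) ^ (-((n + 1) / a)) := by
        gcongr ?_ * ?_
        exact rpow_le_rpow_of_nonpos hya (by linarith) (neg_nonpos.mpr (by positivity))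
    _ = 1 / y := by
        rw [← rpow_mul hy.le, mul_neg, mul_div_cancel₀ _ ha.ne', ← rpow_natCast, ← rpow_add hy,
          show (n : ℝ) + -(n + 1) = -1 by ring, rpow_neg_one, one_div]

theorem integral_Ico_pow_mul_add_rpow_le_log {n : ℕ} {a ε m R : ℝ} (ha : 0 < a) (hε : 0 < ε)
    (hm : 0 < m) (hmR : m ≤ R) :
    ∫ y in Ico m R, y ^ n * (ε + y ^ a) ^ (-((n + 1) / a)) ≤ log (R / m) := by
  have h0 : (0 : ℝ) ∉ uIcc m R := notMem_uIcc_of_lt hm (hm.trans_le hmR)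
  calc ∫ y in Ico m R, y ^ n * (ε + y ^ a) ^ (-((n + 1) / a)) ≤ ∫ y in Ico m R, 1 / y := by
        refine setIntegral_mono_on ?_ ?_ measurableSet_Ico fun y hy =>
          pow_mul_add_rpow_le_one_div ha hε (hm.trans_le hy.1)
        · exact (integrableOn_Icc_pow_mul_add_rpow_rpow n _ ha.le hε hm.le).mono_set
            Ico_subset_Icc_self
        · exact ((continuousOn_const.div continuousOn_id fun y hy => (hm.trans_le hy.1).ne')
            |>.integrableOn_Icc).mono_set Ico_subset_Icc_self
    _ = log (R / m) := by
        rw [integral_Ico_eq_integral_Ioo, ← integral_Ioc_eq_integral_Ioo,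
          ← intervalIntegral.integral_of_le hmR, integral_one_div h0]

theorem integral_Ioo_pow_mul_add_rpow_le_log (n : ℕ) {a ε R : ℝ} (ha : 0 < a) (hε : 0 < ε)
    (hR : 0 < R) :
    ∫ y in Ioo 0 R, y ^ n * (ε + y ^ a) ^ (-((n + 1) / a))
      ≤ 1 / (n + 1) + |log R| + |log ε| / a := by
  set r := ε ^ (1 / a)
  have hr : 0 < r := rpow_pos_of_pos hε _
  set m := min r R
  have hm : 0 < m := lt_min hr hR
  have hmR : m ≤ R := min_le_right r R
  have hint : IntegrableOn (fun y : ℝ => y ^ n * (ε + y ^ a) ^ (-((n + 1) / a))) (Icc 0 R) :=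
    integrableOn_Icc_pow_mul_add_rpow_rpow n _ ha.le hε le_rfl
  have hnear : ∫ y in Ioo 0 m, y ^ n * (ε + y ^ a) ^ (-((n + 1) / a)) ≤ 1 / (n + 1) :=
    calc _ ≤ m ^ (n + 1) / (n + 1) * ε ^ (-((n + 1) / a)) :=
          integral_Ioo_pow_mul_add_rpow_le ha hε hm.le
      _ ≤ r ^ (n + 1) / (n + 1) * ε ^ (-((n + 1) / a)) := by
          gcongr
          exact min_le_left r R
      _ = 1 / (n + 1) := by
          rw [div_mul_eq_mul_div, ← rpow_natCast, ← rpow_mul hε.le, ← rpow_add hε]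
          push_cast
          rw [show 1 / a * (n + 1) + -((n + 1) / a) = 0 by ring, rpow_zero]
  have hfar : log (R / m) ≤ |log R| + |log ε| / a := by
    rcases min_choice r R with h | h <;> simp only [m, h]
    · rw [log_div hR.ne' hr.ne', log_rpow hε, one_div_mul_eq_div, sub_eq_add_neg, ← neg_div]
      gcongr
      · exact le_abs_self _
      · exact neg_le_abs _
    · rw [div_self hR.ne', log_one]
      positivity
  rw [← Ioo_union_Ico_eq_Ioo hm hmR, setIntegral_union
    ((Iio_disjoint_Ici le_rfl).mono Ioo_subset_Iio_self Ico_subset_Ici_self) measurableSet_Ico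
    (hint.mono_set (Ioo_subset_Icc_self.trans (Icc_subset_Icc_right hmR)))
    (hint.mono_set (Ico_subset_Icc_self.trans (Icc_subset_Icc_left hm.le)))]
  linarith [integral_Ico_pow_mul_add_rpow_le_log (n := n) ha hε hm hmR]

theorem stmt_10_general (s : ℝ) (hs2 : s < 2)
    (U : ℝ → EuclideanSpace ℝ (Fin 4) → ℝ)
    (hU : ∀ ε ∈ Set.Ioo (0 : ℝ) (1 / 2), ∀ x, U ε x
      = ε ^ (1 / (2 - s)) * (ε + ‖x‖ ^ (2 - s)) ^ (-(2 / (2 - s))))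
    (R : ℝ) (hR : 0 < R) :
    ∃ C > (0 : ℝ), ∀ ε ∈ Set.Ioo (0 : ℝ) (1 / 2),
      (∫ x in Metric.ball (0 : EuclideanSpace ℝ (Fin 4)) R, U ε x ^ 2)
        ≤ C * ε ^ (2 / (2 - s)) * |Real.log ε| := by
  have ha : 0 < 2 - s := by linarith
  set V := volume.real (ball (0 : EuclideanSpace ℝ (Fin 4)) 1)
  have hV : 0 < V :=
    ENNReal.toReal_pos (measure_ball_pos _ _ one_pos).ne' measure_ball_lt_top.ne
  have hlog2 : 0 < log 2 := log_pos one_lt_two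
  refine ⟨4 * V * ((1 / 4 + |log R|) / log 2 + 1 / (2 - s)), by positivity, ?_⟩
  rintro ε ⟨hε, hε2⟩
  have hUsq : ∀ x : EuclideanSpace ℝ (Fin 4),
      U ε x ^ 2 = ε ^ (2 / (2 - s)) * (ε + ‖x‖ ^ (2 - s)) ^ (-(((3 : ℕ) + 1) / (2 - s))) := by
    intro x
    rw [hU ε ⟨hε, hε2⟩, mul_pow, ← rpow_mul_natCast hε.le,
      ← rpow_mul_natCast (by positivity)]
    push_cast
    ring_nf
  have hlogε : log 2 ≤ |log ε| := by
    rw [abs_of_neg (log_neg hε (by linarith)), ← neg_le_neg_iff, neg_neg, ← log_inv]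
    exact log_le_log hε (by linarith)
  have hsmall : 1 / 4 + |log R| ≤ (1 / 4 + |log R|) / log 2 * |log ε| := by
    rw [div_mul_eq_mul_div, le_div_iff₀ hlog2]
    gcongr
  calc ∫ x in ball (0 : EuclideanSpace ℝ (Fin 4)) R, U ε x ^ 2
      = ε ^ (2 / (2 - s)) * (4 * V *
          ∫ y in Ioo 0 R, y ^ 3 * (ε + y ^ (2 - s)) ^ (-(((3 : ℕ) + 1) / (2 - s)))) := by
        simp_rw [hUsq]
        rw [integral_const_mul, setIntegral_ball_fun_norm volume
          (fun r => (ε + r ^ (2 - s)) ^ (-(((3 : ℕ) + 1) / (2 - s)))), finrank_euclideanSpace_fin]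
        simp only [smul_eq_mul, nsmul_eq_mul, V]
        push_cast
        ring
    _ ≤ ε ^ (2 / (2 - s)) * (4 * V * (1 / ((3 : ℕ) + 1) + |log R| + |log ε| / (2 - s))) := by
        gcongr
        exact integral_Ioo_pow_mul_add_rpow_le_log 3 ha hε hR
    _ ≤ ε ^ (2 / (2 - s)) * (4 * V * (((1 / 4 + |log R|) / log 2 + 1 / (2 - s)) * |log ε|)) := by
        rw [add_mul, one_div_mul_eq_div]
        push_cast
        gcongr
        linarith
    _ = _ := by ring

/-- L² estimate for the truncated extremal profile in dimension N = 4: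
∫_{B_R} U_ε² ≤ C ε^{2/(2−s)} |ln ε|. -/
theorem stmt_10 (s : ℝ) (hs : 0 < s) (hs2 : s < 2)
    (U : ℝ → EuclideanSpace ℝ (Fin 4) → ℝ)
    (hU : ∀ ε ∈ Set.Ioo (0 : ℝ) (1 / 2), ∀ x, U ε x
      = ε ^ (1 / (2 - s)) * (ε + ‖x‖ ^ (2 - s)) ^ (-(2 / (2 - s))))
    (R : ℝ) (hR : 0 < R) :
    ∃ C > (0 : ℝ), ∀ ε ∈ Set.Ioo (0 : ℝ) (1 / 2),
      (∫ x in Metric.ball (0 : EuclideanSpace ℝ (Fin 4)) R, U ε x ^ 2)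
        ≤ C * ε ^ (2 / (2 - s)) * |Real.log ε| :=
  stmt_10_general s hs2 U hU R hR
end
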